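/- Let I = [a,b] or [a,b) with a ≠ b be an arc of S¹ = ℝ/ℤ, and let {f_{p,q}}_{(p,q)∈I²_*} be an intrinsic conic system on I such that f_{a,a} = f_{a,b} and F_{a,b} ∩ (a,b) = ∅. Then there exist two distinct points a₁, b₁ ∈ (a,b) with a ≺ a₁ ≺ b₁ ≺ b such that f_{a₁,b₁} = f_{a₁,a₁}, the support F_{a₁,b₁} = F_{a₁,a₁} is contained in (a,b), b₁ is isolated in F_{a₁,b₁}, and F_{a₁,b₁} has exactly two connected components. -/

import Mathlib

open Filter Topology

noncomputable section

/-- The circle S¹ = ℝ/ℤ. -/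
abbrev S1 := AddCircle (1 : ℝ)

/-- The projection ℝ → S¹. -/
def pr (x : ℝ) : S1 := (x : S1)

/-- The closed arc from `a` to `b` (for real representatives `a ≤ b`). -/
def arcCC (a b : ℝ) : Set S1 := pr '' Set.Icc a b

/-- The half-open arc `[a,b)`. -/
def arcCO (a b : ℝ) : Set S1 := pr '' Set.Ico a b

/-- The half-open arc `(a,b]`. -/
def arcOC (a b : ℝ) : Set S1 := pr '' Set.Ioc a b

/-- The open arc `(a,b)`. -/
def arcOO (a b : ℝ) : Set S1 := pr '' Set.Ioo a b

/-- `I` is an arc of the circle: the image of an interval of positive length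
less than 1 (closed, half-open, or open). -/
def IsArc (I : Set S1) : Prop :=
  ∃ a b : ℝ, a < b ∧ b < a + 1 ∧
    (I = arcCC a b ∨ I = arcCO a b ∨ I = arcOC a b ∨ I = arcOO a b)

/-- `p ≺ q ≺ r` cyclically: the three points admit representatives
`p̃ < q̃ < r̃ < p̃ + 1`. -/
def cyc3 (p q r : S1) : Prop :=
  ∃ a b c : ℝ, pr a = p ∧ pr b = q ∧ pr c = r ∧ a < b ∧ b < c ∧ c < a + 1

/-- `p ≺ q ≺ r ≺ s` cyclically: the four points admit representatives
`p̃ < q̃ < r̃ < s̃ < p̃ + 1`. -/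
def cyc4 (p q r s : S1) : Prop :=
  ∃ a b c d : ℝ, pr a = p ∧ pr b = q ∧ pr c = r ∧ pr d = s ∧
    a < b ∧ b < c ∧ c < d ∧ d < a + 1

/-- `x` is an isolated point of the set `F`. -/
def IsolatedIn (x : S1) (F : Set S1) : Prop :=
  ∃ U : Set S1, IsOpen U ∧ x ∈ U ∧ U ∩ F = {x}

/-- The set `F` has exactly two connected components. -/
def TwoComponents (F : Set S1) : Prop :=
  ∃ x ∈ F, ∃ y ∈ F, connectedComponentIn F x ≠ connectedComponentIn F y ∧
    ∀ z ∈ F, connectedComponentIn F z = connectedComponentIn F x ∨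
      connectedComponentIn F z = connectedComponentIn F y

/-- An intrinsic circle system on an index set `I ⊆ S¹`: a family of closed
sets `F p` (for `p ∈ I`) satisfying axioms (I0)–(I3). -/
structure IsIntrinsicCircleSystem (I : Set S1) (F : S1 → Set S1) : Prop where
  /-- The sets of the family are closed. -/
  isClosed : ∀ p ∈ I, IsClosed (F p)
  /-- (I0) `p ∈ F p`. -/
  mem_self : ∀ p ∈ I, p ∈ F p
  /-- (I1) if `F p` and `F q` meet then they coincide. -/
  eq_of_inter : ∀ p ∈ I, ∀ q ∈ I, (F p ∩ F q).Nonempty → F p = F q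
  /-- (I2) if `p' ∈ F p`, `q' ∈ F q` and `p ≺ q ≺ p' ≺ q'` cyclically then
  `F p = F q`. -/
  eq_of_cyc : ∀ p ∈ I, ∀ q ∈ I, ∀ p' ∈ F p, ∀ q' ∈ F q,
    cyc4 p q p' q' → F p = F q
  /-- (I3) closedness under limits of sequences from the interior of `I`. -/
  mem_of_tendsto : ∀ (pn qn : ℕ → S1) (p q : S1),
    (∀ n, pn n ∈ interior I) → (∀ n, qn n ∈ interior I) →
    p ∈ I → q ∈ I →
    Tendsto pn atTop (nhds p) → Tendsto qn atTop (nhds q) →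
    (∀ n, qn n ∈ F (pn n)) → q ∈ F p

/-- `p ⪯ q ⪯ p' ⪯ q' ≺ p'' ≺ q'' (≺ p)` cyclically, via representatives
`p̃ ≤ q̃ ≤ p̃' ≤ q̃' < p̃'' < q̃'' < p̃ + 1`. -/
def chain6 (p q p' q' p'' q'' : S1) : Prop :=
  ∃ a b c d e g : ℝ, pr a = p ∧ pr b = q ∧ pr c = p' ∧ pr d = q' ∧
    pr e = p'' ∧ pr g = q'' ∧
    a ≤ b ∧ b ≤ c ∧ c ≤ d ∧ d < e ∧ e < g ∧ g < a + 1

/-- The reverse cyclic order `p ⪰ q ⪰ p' ⪰ q' ≻ p'' ≻ q'' (≻ p)`, via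
representatives `p̃ ≥ q̃ ≥ p̃' ≥ q̃' > p̃'' > q̃'' > p̃ - 1`. -/
def chain6rev (p q p' q' p'' q'' : S1) : Prop :=
  ∃ a b c d e g : ℝ, pr a = p ∧ pr b = q ∧ pr c = p' ∧ pr d = q' ∧
    pr e = p'' ∧ pr g = q'' ∧
    b ≤ a ∧ c ≤ b ∧ d ≤ c ∧ e < d ∧ g < e ∧ a - 1 < g

/-- The index set `I²_* = (Ī × Ī) \ {(p,p) : p ∈ Ī \ I}` of an intrinsic conic
system on `I`. -/
def ConicDom (I : Set S1) : Set (S1 × S1) :=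
  {pq | pq.1 ∈ closure I ∧ pq.2 ∈ closure I ∧ (pq.1 = pq.2 → pq.1 ∈ I)}

/-- The support `F_{p,q} = {r : f_{p,q}(r) > 0}`. -/
def suppF (f : S1 → S1 → S1 → ℕ∞) (p q : S1) : Set S1 := {r | f p q r ≠ 0}

/-- An intrinsic conic system on `I`: a family of functions
`f p q : S¹ → {0,2,4,…} ∪ {∞}`, indexed by `(p,q) ∈ I²_*`, satisfying axioms
(A1)–(A8). -/
structure IsIntrinsicConicSystem (I : Set S1) (f : S1 → S1 → S1 → ℕ∞) : Prop where
  /-- The values of the family are even numbers or `∞`. -/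
  even_values : ∀ p q r : S1, (p, q) ∈ ConicDom I →
    f p q r = ⊤ ∨ ∃ k : ℕ, f p q r = ((2 * k : ℕ) : ℕ∞)
  /-- (A1) the supports are closed. -/
  supp_closed : ∀ p q : S1, (p, q) ∈ ConicDom I → IsClosed (suppF f p q)
  /-- (A1) `p, q ∈ F_{p,q}`. -/
  self_mem : ∀ p q : S1, (p, q) ∈ ConicDom I → f p q p ≠ 0 ∧ f p q q ≠ 0
  /-- (A2) symmetry. -/
  symm : ∀ p q : S1, (p, q) ∈ ConicDom I → f p q = f q p
  /-- (A3) if `F_{p,q}` and `F_{p,r}` share a point `s ≠ p`, then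
  `f_{p,q} = f_{p,r}`. -/
  eq_of_common : ∀ p q r s : S1, (p, q) ∈ ConicDom I → (p, r) ∈ ConicDom I →
    s ≠ p → f p q s ≠ 0 → f p r s ≠ 0 → f p q = f p r
  /-- (A4) interlacing in the (possibly reversed) cyclic order forces
  equality. -/
  eq_of_chain : ∀ p q p' q' p'' q'' : S1,
    (p, p') ∈ ConicDom I → (q, q') ∈ ConicDom I →
    f p p' p'' ≠ 0 → f q q' q'' ≠ 0 →
    (chain6 p q p' q' p'' q'' ∨ chain6rev p q p' q' p'' q'') →
    (p = p' → 4 ≤ f p p' p) → (q = q' → 4 ≤ f q q' q) →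
    f p p' = f q q'
  /-- (A5) if `f_{p,q}(r) ≥ 4` and `r ∈ I` then `f_{r,r} = f_{p,q}`. -/
  eq_diag : ∀ p q r : S1, (p, q) ∈ ConicDom I → 4 ≤ f p q r → r ∈ I →
    f r r = f p q
  /-- (A6) lower semicontinuity of multiplicities under limits, with strict
  increase for pairs of distinct points. -/
  limit_mult : ∀ (pn qn rn₁ rn₂ : ℕ → S1) (p q r : S1) (k₁ k₂ : ℕ),
    (∀ n, (pn n, qn n) ∈ ConicDom I) → (p, q) ∈ ConicDom I →
    Tendsto pn atTop (nhds p) → Tendsto qn atTop (nhds q) →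
    (∀ n, rn₁ n ∈ closure I ∧ rn₁ n ∈ suppF f (pn n) (qn n)) →
    (∀ n, rn₂ n ∈ closure I ∧ rn₂ n ∈ suppF f (pn n) (qn n)) →
    r ∈ closure I →
    Tendsto rn₁ atTop (nhds r) → Tendsto rn₂ atTop (nhds r) →
    (∀ n, (k₁ : ℕ∞) ≤ f (pn n) (qn n) (rn₁ n)) →
    (∀ n, (k₂ : ℕ∞) ≤ f (pn n) (qn n) (rn₂ n)) →
    ((max k₁ k₂ : ℕ) : ℕ∞) ≤ f p q r ∧
      ((∀ n, rn₁ n ≠ rn₂ n) → ((max k₁ k₂ : ℕ) : ℕ∞) < f p q r)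
  /-- (A7) the total multiplicity of `f_{p,q}` is at least six. -/
  total_six : ∀ p q : S1, (p, q) ∈ ConicDom I →
    ∃ s : Finset S1, 6 ≤ ∑ r ∈ s, f p q r
  /-- (A8) if `f_{p,q}(p) = 2` then `p` is isolated in `F_{p,q}`. -/
  isolated_of_two : ∀ p q : S1, (p, q) ∈ ConicDom I → f p q p = 2 →
    IsolatedIn p (suppF f p q)

/-!
For `x ∈ (a,b)` off the tangent conic `f_{a,a}` (which has multiplicity `≥ 4` at `a` by (A6)
and passes through `b`), (A4) confines `F_{a,x}` to `a` and an "arc class" `K(x) ⊆ (a,b)`;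
moreover `f_{a,x}(a) = 2` by (A5), so `a` is isolated by (A8) and `K(x)` is compact. By (A3) and
(A4) these classes never interlace, so every point of a gap of `K(x)` has its class inside the
gap. Halving gaps converges to a point whose class would be a singleton; hence some class is an
interval, and (A6), resp. (A7) for a singleton, gives it a point `c` of multiplicity `≥ 4`. Then
`f_{c,c} = f_{a,x}` by (A5), and the same argument run from `c` towards `a` (reflecting the
circle) yields a conic `f_{c,y}` supported on `c` and an interval of `(a,c)` carrying a point `a₁`
of multiplicity `≥ 4`; the pair is `(a₁, c)`.
-/

open scoped Pointwise

lemma continuous_pr : Continuous pr := continuous_quotient_mk'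

lemma pr_add_one (x : ℝ) : pr (x + 1) = pr x := AddCircle.coe_add_period 1 x

lemma pr_neg (x : ℝ) : pr (-x) = -pr x := AddCircle.coe_neg 1

lemma image_pr_neg (s : Set ℝ) : pr '' (-s) = -(pr '' s) := by
  rw [← Set.image_neg_eq_neg, ← Set.image_neg_eq_neg, Set.image_image, Set.image_image]
  simp only [pr_neg]

lemma pr_injOn_Ico (c : ℝ) : Set.InjOn pr (Set.Ico c (c + 1)) :=
  fun _ hx _ hy h => (AddCircle.coe_eq_coe_iff_of_mem_Ico hx hy).1 h

lemma exists_mem_Ioc_pr_eq (c : ℝ) (u : S1) : ∃ t ∈ Set.Ioc c (c + 1), pr t = u :=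
  ⟨AddCircle.equivIoc 1 c u, (AddCircle.equivIoc 1 c u).2,
    (AddCircle.equivIoc 1 c).symm_apply_apply u⟩

lemma mem_conicDom_of_ne {I : Set S1} {p q : S1} (hp : p ∈ closure I) (hq : q ∈ closure I)
    (hpq : p ≠ q) : (p, q) ∈ ConicDom I :=
  ⟨hp, hq, fun h => absurd h hpq⟩

lemma mem_conicDom_self {I : Set S1} {p : S1} (hp : p ∈ I) : (p, p) ∈ ConicDom I :=
  ⟨subset_closure hp, subset_closure hp, fun _ => hp⟩

lemma isolatedIn_insert {p : S1} {K : Set S1} (hK : IsClosed K) (hp : p ∉ K) :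
    IsolatedIn p (insert p K) := by
  refine ⟨Kᶜ, hK.isOpen_compl, hp, ?_⟩
  ext u
  constructor
  · rintro ⟨huK, rfl | hu⟩
    exacts [rfl, absurd hu huK]
  · rintro rfl
    exact ⟨hp, Set.mem_insert u K⟩

lemma IsolatedIn.connectedComponentIn_eq {p : S1} {F : Set S1} (h : IsolatedIn p F)
    (hp : p ∈ F) : connectedComponentIn F p = {p} := by
  obtain ⟨U, hU, hpU, hUF⟩ := h
  refine Set.eq_singleton_iff_unique_mem.2 ⟨mem_connectedComponentIn hp, fun u hu => ?_⟩
  by_contra hup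
  -- `U` and `{p}ᶜ` would disconnect the component of `p`
  obtain ⟨w, hwC, hwU, hwp⟩ := isPreconnected_connectedComponentIn U {p}ᶜ hU
    isOpen_compl_singleton (fun v _ => (em (v = p)).imp (fun h : v = p => h ▸ hpU) id)
    ⟨p, mem_connectedComponentIn hp, hpU⟩ ⟨u, hu, hup⟩
  have : w ∈ U ∩ F := ⟨hwU, connectedComponentIn_subset F p hwC⟩
  exact hwp (hUF ▸ this)

lemma IsolatedIn.neg {p : S1} {F : Set S1} (h : IsolatedIn p F) : IsolatedIn (-p) (-F) := by
  obtain ⟨U, hU, hpU, hUF⟩ := h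
  refine ⟨-U, hU.neg, Set.neg_mem_neg.2 hpU, ?_⟩
  rw [← Set.inter_neg, hUF, Set.neg_singleton]

lemma twoComponents_insert {p : S1} {K : Set S1} (hK : IsClosed K) (hKc : IsPreconnected K)
    (hKne : K.Nonempty) (hp : p ∉ K) : TwoComponents (insert p K) := by
  have hcomp_p := (isolatedIn_insert hK hp).connectedComponentIn_eq (Set.mem_insert p K)
  have hcomp_K : ∀ z ∈ K, connectedComponentIn (insert p K) z = K := by
    intro z hz
    refine subset_antisymm (fun u hu => ?_)
      (hKc.subset_connectedComponentIn hz (Set.subset_insert p K))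
    rcases connectedComponentIn_subset _ z hu with rfl | huK
    · have hz' := mem_connectedComponentIn (Set.mem_insert_of_mem u hz)
      rw [connectedComponentIn_eq hu, hcomp_p, Set.mem_singleton_iff] at hz'
      exact absurd (hz' ▸ hz) hp
    · exact huK
  obtain ⟨k, hk⟩ := hKne
  refine ⟨k, Set.mem_insert_of_mem p hk, p, Set.mem_insert p K, ?_, ?_⟩
  · rw [hcomp_K k hk, hcomp_p]
    exact fun h => hp (h ▸ Set.mem_singleton p)
  · rintro z (rfl | hz)
    exacts [Or.inr rfl, Or.inl ((hcomp_K z hz).trans (hcomp_K k hk).symm)]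

namespace IsIntrinsicConicSystem

variable {I : Set S1} {f : S1 → S1 → S1 → ℕ∞}

lemma two_le_of_ne_zero (hf : IsIntrinsicConicSystem I f) {p q r : S1}
    (hd : (p, q) ∈ ConicDom I) (h : f p q r ≠ 0) : 2 ≤ f p q r := by
  rcases hf.even_values p q r hd with h' | ⟨k, h'⟩
  · simp [h']
  · rw [h'] at h ⊢
    norm_cast at h ⊢
    omega

lemma four_le_of_two_lt (hf : IsIntrinsicConicSystem I f) {p q r : S1}
    (hd : (p, q) ∈ ConicDom I) (h : 2 < f p q r) : 4 ≤ f p q r := by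
  rcases hf.even_values p q r hd with h' | ⟨k, h'⟩
  · simp [h']
  · rw [h'] at h ⊢
    norm_cast at h ⊢
    omega

lemma eq_two_of_lt_four (hf : IsIntrinsicConicSystem I f) {p q r : S1}
    (hd : (p, q) ∈ ConicDom I) (h : f p q r ≠ 0) (h4 : f p q r < 4) : f p q r = 2 :=
  le_antisymm (not_lt.1 fun h2 => (hf.four_le_of_two_lt hd h2).not_gt h4)
    (hf.two_le_of_ne_zero hd h)

lemma four_le_of_tendsto (hf : IsIntrinsicConicSystem I f) {pn qn rn₁ rn₂ : ℕ → S1}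
    {p q r : S1} (hdn : ∀ n, (pn n, qn n) ∈ ConicDom I) (hd : (p, q) ∈ ConicDom I)
    (hp : Tendsto pn atTop (𝓝 p)) (hq : Tendsto qn atTop (𝓝 q))
    (h₁ : ∀ n, rn₁ n ∈ closure I ∧ rn₁ n ∈ suppF f (pn n) (qn n))
    (h₂ : ∀ n, rn₂ n ∈ closure I ∧ rn₂ n ∈ suppF f (pn n) (qn n))
    (hr : r ∈ closure I) (hr₁ : Tendsto rn₁ atTop (𝓝 r)) (hr₂ : Tendsto rn₂ atTop (𝓝 r))
    (hne : ∀ n, rn₁ n ≠ rn₂ n) : 4 ≤ f p q r := by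
  have h2 := (hf.limit_mult pn qn rn₁ rn₂ p q r 2 2 hdn hd hp hq h₁ h₂ hr hr₁ hr₂
    (fun n => mod_cast hf.two_le_of_ne_zero (hdn n) (h₁ n).2)
    (fun n => mod_cast hf.two_le_of_ne_zero (hdn n) (h₂ n).2)).2 hne
  exact hf.four_le_of_two_lt hd (mod_cast h2)

lemma four_le_of_suppF_subset_pair (hf : IsIntrinsicConicSystem I f) {p q u v : S1}
    (hd : (p, q) ∈ ConicDom I) (huv : u ≠ v) (hsupp : suppF f p q ⊆ {u, v})
    (hu : f p q u = 2) : 4 ≤ f p q v := by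
  obtain ⟨s, hs⟩ := hf.total_six p q hd
  have h6 : 6 ≤ 2 + f p q v := by
    calc 6 ≤ ∑ r ∈ s, f p q r := hs
      _ ≤ ∑ r ∈ {u, v}, f p q r :=
        Finset.sum_le_sum_of_ne_zero fun r _ hr => by simpa using hsupp hr
      _ = 2 + f p q v := by rw [Finset.sum_pair huv, hu]
  generalize f p q v = m at h6 ⊢
  induction m using ENat.recTopCoe with
  | top => exact le_top
  | coe n =>
    norm_cast at h6 ⊢
    omega

lemma four_le_apply_self (hf : IsIntrinsicConicSystem I f) {α β : ℝ} (hαβ : α < β)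
    (hβα : β < α + 1) (hIoo : ∀ t ∈ Set.Ioo α β, pr t ∈ I) (hα : pr α ∈ I) :
    4 ≤ f (pr α) (pr α) (pr α) := by
  obtain ⟨u, -, hu, hlim⟩ := exists_seq_strictAnti_tendsto' hαβ
  have hne : ∀ n, pr α ≠ pr (u n) := fun n h =>
    (hu n).1.ne ((pr_injOn_Ico α) ⟨le_rfl, by linarith⟩
      ⟨(hu n).1.le, (hu n).2.trans hβα⟩ h)
  have hdn : ∀ n, (pr α, pr (u n)) ∈ ConicDom I := fun n =>
    mem_conicDom_of_ne (subset_closure hα) (subset_closure (hIoo _ (hu n))) (hne n)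
  exact hf.four_le_of_tendsto hdn (mem_conicDom_self hα) tendsto_const_nhds
    ((continuous_pr.tendsto α).comp hlim)
    (fun n => ⟨subset_closure hα, (hf.self_mem _ _ (hdn n)).1⟩)
    (fun n => ⟨subset_closure (hIoo _ (hu n)), (hf.self_mem _ _ (hdn n)).2⟩)
    (subset_closure hα) tendsto_const_nhds ((continuous_pr.tendsto α).comp hlim) hne

end IsIntrinsicConicSystem

def conicNeg (f : S1 → S1 → S1 → ℕ∞) : S1 → S1 → S1 → ℕ∞ := fun p q r => f (-p) (-q) (-r)

lemma chain6.neg {p q p' q' p'' q'' : S1} (h : chain6 p q p' q' p'' q'') :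
    chain6rev (-p) (-q) (-p') (-q') (-p'') (-q'') := by
  obtain ⟨a, b, c, d, e, g, rfl, rfl, rfl, rfl, rfl, rfl, h₁, h₂, h₃, h₄, h₅, h₆⟩ := h
  exact ⟨-a, -b, -c, -d, -e, -g, pr_neg a, pr_neg b, pr_neg c, pr_neg d, pr_neg e, pr_neg g,
    by linarith, by linarith, by linarith, by linarith, by linarith, by linarith⟩

lemma chain6rev.neg {p q p' q' p'' q'' : S1} (h : chain6rev p q p' q' p'' q'') :
    chain6 (-p) (-q) (-p') (-q') (-p'') (-q'') := by
  obtain ⟨a, b, c, d, e, g, rfl, rfl, rfl, rfl, rfl, rfl, h₁, h₂, h₃, h₄, h₅, h₆⟩ := h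
  exact ⟨-a, -b, -c, -d, -e, -g, pr_neg a, pr_neg b, pr_neg c, pr_neg d, pr_neg e, pr_neg g,
    by linarith, by linarith, by linarith, by linarith, by linarith, by linarith⟩

lemma mem_conicDom_neg {I : Set S1} {p q : S1} :
    (p, q) ∈ ConicDom (-I) ↔ (-p, -q) ∈ ConicDom I := by
  simp only [ConicDom, Set.mem_ofPred_eq, ← neg_closure, Set.mem_neg, neg_inj]

lemma suppF_conicNeg (f : S1 → S1 → S1 → ℕ∞) (p q : S1) :
    suppF (conicNeg f) p q = -suppF f (-p) (-q) := rfl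

lemma conicNeg_pr (f : S1 → S1 → S1 → ℕ∞) (x y z : ℝ) :
    conicNeg f (pr x) (pr y) (pr z) = f (pr (-x)) (pr (-y)) (pr (-z)) := by
  simp only [conicNeg, pr_neg]

lemma IsIntrinsicConicSystem.neg {I : Set S1} {f : S1 → S1 → S1 → ℕ∞}
    (hf : IsIntrinsicConicSystem I f) : IsIntrinsicConicSystem (-I) (conicNeg f) where
  even_values p q r hd := hf.even_values _ _ _ (mem_conicDom_neg.1 hd)
  supp_closed p q hd := (hf.supp_closed _ _ (mem_conicDom_neg.1 hd)).neg
  self_mem p q hd := hf.self_mem _ _ (mem_conicDom_neg.1 hd)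
  symm p q hd := funext fun r => congrFun (hf.symm _ _ (mem_conicDom_neg.1 hd)) (-r)
  eq_of_common p q r s hd₁ hd₂ hsp h₁ h₂ := funext fun t => congrFun
    (hf.eq_of_common _ _ _ (-s) (mem_conicDom_neg.1 hd₁) (mem_conicDom_neg.1 hd₂)
      (neg_inj.not.2 hsp) h₁ h₂) (-t)
  eq_of_chain p q p' q' p'' q'' hd₁ hd₂ h₁ h₂ hch hp hq := funext fun t => congrFun
    (hf.eq_of_chain _ _ _ _ (-p'') (-q'') (mem_conicDom_neg.1 hd₁) (mem_conicDom_neg.1 hd₂)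
      h₁ h₂ (hch.symm.imp chain6rev.neg chain6.neg) (fun h => hp (neg_inj.1 h))
      (fun h => hq (neg_inj.1 h))) (-t)
  eq_diag p q r hd h4 hr := funext fun t => congrFun (hf.eq_diag _ _ (-r)
    (mem_conicDom_neg.1 hd) h4 hr) (-t)
  limit_mult pn qn rn₁ rn₂ p q r k₁ k₂ hdn hd hp hq h₁ h₂ hr hr₁ hr₂ hk₁ hk₂ := by
    rw [← neg_closure] at h₁ h₂ hr
    exact (hf.limit_mult (-pn) (-qn) (-rn₁) (-rn₂) (-p) (-q) (-r) k₁ k₂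
      (fun n => mem_conicDom_neg.1 (hdn n)) (mem_conicDom_neg.1 hd) hp.neg hq.neg h₁ h₂ hr
      hr₁.neg hr₂.neg hk₁ hk₂).imp_right fun h hne => h fun n => neg_inj.not.2 (hne n)
  total_six p q hd := by
    obtain ⟨s, hs⟩ := hf.total_six _ _ (mem_conicDom_neg.1 hd)
    refine ⟨s.image Neg.neg, ?_⟩
    rwa [Finset.sum_image fun x _ y _ h => neg_inj.1 h, Finset.sum_congr rfl fun x _ => by
      rw [conicNeg, neg_neg]]
  isolated_of_two p q hd h := by
    simpa only [suppF_conicNeg, neg_neg] using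
      (hf.isolated_of_two _ _ (mem_conicDom_neg.1 hd) h).neg

lemma IsCompact.exists_gap_of_not_ordConnected {X : Type*} [ConditionallyCompleteLinearOrder X]
    [TopologicalSpace X] [OrderTopology X] {K : Set X} (hK : IsCompact K)
    (h : ¬ K.OrdConnected) : ∃ γ ∈ K, ∃ δ ∈ K, γ < δ ∧ Set.Ioo γ δ ∩ K = ∅ := by
  obtain ⟨p, hp, q, hq, -, w, hpw, hwq, hwK⟩ :
      ∃ p ∈ K, ∃ q ∈ K, p ≤ q ∧ ∃ w, p ≤ w ∧ w ≤ q ∧ w ∉ K := by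
    simpa [Set.ordConnected_iff, Set.subset_def] using h
  have hL : IsCompact (K ∩ Set.Iic w) := hK.inter_right isClosed_Iic
  have hR : IsCompact (K ∩ Set.Ici w) := hK.inter_right isClosed_Ici
  have hγ := hL.sSup_mem ⟨p, hp, hpw⟩
  have hδ := hR.sInf_mem ⟨q, hq, hwq⟩
  have hγw : sSup (K ∩ Set.Iic w) < w := hγ.2.lt_of_ne fun h => hwK (h ▸ hγ.1)
  have hwδ : w < sInf (K ∩ Set.Ici w) := hδ.2.lt_of_ne' fun h => hwK (h ▸ hδ.1)
  refine ⟨_, hγ.1, _, hδ.1, hγw.trans hwδ, Set.eq_empty_of_forall_notMem ?_⟩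
  rintro s ⟨⟨hγs, hsδ⟩, hs⟩
  rcases le_total s w with hsw | hws
  · exact (le_csSup hL.bddAbove ⟨hs, hsw⟩).not_gt hγs
  · exact (csInf_le hR.bddBelow ⟨hs, hws⟩).not_gt hsδ

lemma exists_forall_exists_mem_Ioo_of_halving {P : ℝ → ℝ → Prop}
    (hlt : ∀ γ δ, P γ δ → γ < δ)
    (step : ∀ γ δ, P γ δ → ∃ γ' δ', P γ' δ' ∧ γ < γ' ∧ δ' < δ ∧ δ' - γ' ≤ (δ - γ) / 2)
    {γ₀ δ₀ : ℝ} (h₀ : P γ₀ δ₀) :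
    ∃ w, ∀ ε > 0, ∃ γ δ, P γ δ ∧ w ∈ Set.Ioo γ δ ∧ δ - γ < ε := by
  choose nextγ nextδ hnext using step
  let next : {d : ℝ × ℝ // P d.1 d.2} → {d : ℝ × ℝ // P d.1 d.2} := fun d =>
    ⟨(nextγ _ _ d.2, nextδ _ _ d.2), (hnext _ _ d.2).1⟩
  let seq : ℕ → {d : ℝ × ℝ // P d.1 d.2} := fun n => next^[n] ⟨(γ₀, δ₀), h₀⟩
  have hsucc : ∀ n, seq (n + 1) = next (seq n) := fun n =>
    Function.iterate_succ_apply' next n _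
  set γ : ℕ → ℝ := fun n => (seq n).1.1
  set δ : ℕ → ℝ := fun n => (seq n).1.2
  have hγ : StrictMono γ := strictMono_nat_of_lt_succ fun n => by
    simpa [γ, hsucc n] using (hnext _ _ (seq n).2).2.1
  have hδ : StrictAnti δ := strictAnti_nat_of_succ_lt fun n => by
    simpa [δ, hsucc n] using (hnext _ _ (seq n).2).2.2.1
  have hlen : ∀ n, δ n - γ n ≤ (δ₀ - γ₀) * (1 / 2) ^ n := by
    intro n
    induction n with
    | zero => simp [γ, δ, seq]
    | succ n ih =>
      have := (hnext _ _ (seq n).2).2.2.2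
      simp only [γ, δ, hsucc n] at this ih ⊢
      rw [pow_succ]
      linarith
  have hγδ : ∀ m n, γ m < δ n := fun m n =>
    (hγ.monotone (le_max_left m n)).trans_lt <| (hlt _ _ (seq (max m n)).2).trans_le
      (hδ.antitone (le_max_right m n))
  have hbdd : BddAbove (Set.range γ) := ⟨δ 0, Set.forall_mem_range.2 fun m => (hγδ m 0).le⟩
  refine ⟨⨆ n, γ n, fun ε hε => ?_⟩
  obtain ⟨n, hn⟩ := exists_pow_lt_of_lt_one (div_pos hε (sub_pos.2 (hlt _ _ h₀)))
    (by norm_num : (1 / 2 : ℝ) < 1)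
  refine ⟨γ n, δ n, (seq n).2, ⟨(hγ n.lt_succ_self).trans_le (le_ciSup hbdd _),
    (ciSup_le fun m => (hγδ m (n + 1)).le).trans_lt (hδ n.lt_succ_self)⟩, ?_⟩
  calc δ n - γ n ≤ (δ₀ - γ₀) * (1 / 2) ^ n := hlen n
    _ < (δ₀ - γ₀) * (ε / (δ₀ - γ₀)) := by gcongr; exact sub_pos.2 (hlt _ _ h₀)
    _ = ε := mul_div_cancel₀ ε (sub_pos.2 (hlt _ _ h₀)).ne'

def HasIntervalClass (f : S1 → S1 → S1 → ℕ∞) (α : ℝ) (s : Set ℝ) : Prop :=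
  ∃ x ∈ s, ∃ m r M : ℝ, r ∈ Set.Icc m M ∧ Set.Icc m M ⊆ s ∧ pr α ∉ pr '' Set.Icc m M ∧
    suppF f (pr α) (pr x) = insert (pr α) (pr '' Set.Icc m M) ∧ 4 ≤ f (pr α) (pr x) (pr r)

lemma HasIntervalClass.of_conicNeg {f : S1 → S1 → S1 → ℕ∞} {α : ℝ} {s : Set ℝ}
    (h : HasIntervalClass (conicNeg f) α s) : HasIntervalClass f (-α) (-s) := by
  obtain ⟨x, hx, m, r, M, hr, hsub, hα, hsupp, h4⟩ := h
  refine ⟨-x, Set.neg_mem_neg.2 hx, -M, -r, -m, ⟨neg_le_neg hr.2, neg_le_neg hr.1⟩, ?_, ?_, ?_, ?_⟩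
  · rw [← Set.neg_Icc]
    exact Set.neg_subset_neg.2 hsub
  · rwa [← Set.neg_Icc, image_pr_neg, pr_neg, Set.neg_mem_neg]
  · rw [← Set.neg_Icc, image_pr_neg, pr_neg, pr_neg, ← Set.neg_insert, ← hsupp, suppF_conicNeg,
      neg_neg]
  · rwa [conicNeg_pr] at h4

structure TangentWindow (I : Set S1) (f : S1 → S1 → S1 → ℕ∞) (α β : ℝ) : Prop where
  conic : IsIntrinsicConicSystem I f
  lt : α < β
  lt_add_one : β < α + 1
  pr_mem_of_mem_Ioo : ∀ t ∈ Set.Ioo α β, pr t ∈ I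
  pr_left_mem : pr α ∈ I
  pr_right_mem_closure : pr β ∈ closure I
  four_le_tangent : 4 ≤ f (pr α) (pr α) (pr α)
  tangent_right_ne_zero : f (pr α) (pr α) (pr β) ≠ 0

def arcClass (f : S1 → S1 → S1 → ℕ∞) (α β x : ℝ) : Set ℝ :=
  {t | t ∈ Set.Ioo α β ∧ f (pr α) (pr x) (pr t) ≠ 0}

def IsClassGap (f : S1 → S1 → S1 → ℕ∞) (α β γ δ : ℝ) : Prop :=
  ∃ x ∈ Set.Ioo α β, f (pr α) (pr α) (pr x) = 0 ∧ γ ∈ arcClass f α β x ∧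
    δ ∈ arcClass f α β x ∧ γ < δ ∧ Set.Ioo γ δ ∩ arcClass f α β x = ∅

namespace TangentWindow

variable {I : Set S1} {f : S1 → S1 → S1 → ℕ∞} {α β : ℝ}

lemma pr_injOn (W : TangentWindow I f α β) : Set.InjOn pr (Set.Icc α β) :=
  (pr_injOn_Ico α).mono fun _ ht => (⟨ht.1, ht.2.trans_lt W.lt_add_one⟩ : _ ∈ Set.Ico _ _)

lemma pr_ne_left (W : TangentWindow I f α β) {x : ℝ} (hx : x ∈ Set.Ioc α β) : pr x ≠ pr α :=
  fun h => hx.1.ne' (W.pr_injOn ⟨hx.1.le, hx.2⟩ ⟨le_rfl, W.lt.le⟩ h)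

lemma mem_conicDom_left (W : TangentWindow I f α β) {x : ℝ} (hx : x ∈ Set.Ioo α β) :
    (pr α, pr x) ∈ ConicDom I :=
  mem_conicDom_of_ne (subset_closure W.pr_left_mem)
    (subset_closure (W.pr_mem_of_mem_Ioo x hx)) (W.pr_ne_left (Set.Ioo_subset_Ioc_self hx)).symm

lemma self_mem_arcClass (W : TangentWindow I f α β) {x : ℝ} (hx : x ∈ Set.Ioo α β) :
    x ∈ arcClass f α β x :=
  ⟨hx, (W.conic.self_mem _ _ (W.mem_conicDom_left hx)).2⟩

lemma conic_eq_of_mem_arcClass (W : TangentWindow I f α β) {x γ : ℝ} (hx : x ∈ Set.Ioo α β)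
    (hγ : γ ∈ arcClass f α β x) : f (pr α) (pr γ) = f (pr α) (pr x) :=
  W.conic.eq_of_common _ _ _ (pr γ) (W.mem_conicDom_left hγ.1) (W.mem_conicDom_left hx)
    (W.pr_ne_left (Set.Ioo_subset_Ioc_self hγ.1)) (W.self_mem_arcClass hγ.1).2 hγ.2

lemma conic_eq_tangent (W : TangentWindow I f α β) {x : ℝ} (hx : x ∈ Set.Ioo α β)
    (hxT : f (pr α) (pr α) (pr x) ≠ 0) : f (pr α) (pr x) = f (pr α) (pr α) :=
  W.conic.eq_of_common _ _ _ (pr x) (W.mem_conicDom_left hx)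
    (mem_conicDom_self W.pr_left_mem) (W.pr_ne_left (Set.Ioo_subset_Ioc_self hx))
    (W.self_mem_arcClass hx).2 hxT

lemma apply_right_eq_zero (W : TangentWindow I f α β) {x : ℝ} (hx : x ∈ Set.Ioo α β)
    (hxT : f (pr α) (pr α) (pr x) = 0) : f (pr α) (pr x) (pr β) = 0 := by
  by_contra h
  have := W.conic.eq_of_common _ _ _ (pr β) (W.mem_conicDom_left hx)
    (mem_conicDom_self W.pr_left_mem) (W.pr_ne_left ⟨W.lt, le_rfl⟩) h W.tangent_right_ne_zero
  exact (W.self_mem_arcClass hx).2 (this ▸ hxT)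

lemma apply_left_eq_two (W : TangentWindow I f α β) {x : ℝ} (hx : x ∈ Set.Ioo α β)
    (hxT : f (pr α) (pr α) (pr x) = 0) : f (pr α) (pr x) (pr α) = 2 := by
  have hd := W.mem_conicDom_left hx
  refine W.conic.eq_two_of_lt_four hd (W.conic.self_mem _ _ hd).1 (not_le.1 fun h4 => ?_)
  have := W.conic.eq_diag _ _ _ hd h4 W.pr_left_mem
  exact (W.self_mem_arcClass hx).2 (this ▸ hxT)

/-- A conic through `α` and a point `x` off the tangent conic cannot leave `[α,β)`: by (A4) it
would interlace with the tangent conic through `α` and `β`. -/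
lemma suppF_eq_insert_image (W : TangentWindow I f α β) {x : ℝ} (hx : x ∈ Set.Ioo α β)
    (hxT : f (pr α) (pr α) (pr x) = 0) :
    suppF f (pr α) (pr x) = insert (pr α) (pr '' arcClass f α β x) := by
  refine subset_antisymm (fun u hu => ?_) ?_
  · obtain ⟨t, ⟨hαt, htα⟩, rfl⟩ := exists_mem_Ioc_pr_eq α u
    rcases htα.eq_or_lt with rfl | htα
    · exact Or.inl (pr_add_one α)
    rcases lt_trichotomy t β with htβ | rfl | hβt
    · exact Or.inr ⟨t, ⟨⟨hαt, htβ⟩, hu⟩, rfl⟩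
    · exact absurd (W.apply_right_eq_zero hx hxT) hu
    · have hch : chain6 (pr α) (pr α) (pr α) (pr x) (pr β) (pr t) :=
        ⟨α, α, α, x, β, t, rfl, rfl, rfl, rfl, rfl, rfl, le_rfl, le_rfl, hx.1.le, hx.2, hβt, htα⟩
      have := W.conic.eq_of_chain _ _ _ _ _ _ (mem_conicDom_self W.pr_left_mem)
        (W.mem_conicDom_left hx) W.tangent_right_ne_zero hu (Or.inl hch)
        (fun _ => W.four_le_tangent)
        (fun h => W.pr_ne_left (Set.Ioo_subset_Ioc_self hx) h.symm |>.elim)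
      exact absurd (this ▸ hxT) (W.self_mem_arcClass hx).2
  · rintro u (rfl | ⟨t, ht, rfl⟩)
    exacts [(W.conic.self_mem _ _ (W.mem_conicDom_left hx)).1, ht.2]

lemma isolatedIn_left (W : TangentWindow I f α β) {x : ℝ} (hx : x ∈ Set.Ioo α β)
    (hxT : f (pr α) (pr α) (pr x) = 0) : IsolatedIn (pr α) (suppF f (pr α) (pr x)) :=
  W.conic.isolated_of_two _ _ (W.mem_conicDom_left hx) (W.apply_left_eq_two hx hxT)

lemma isCompact_arcClass (W : TangentWindow I f α β) {x : ℝ} (hx : x ∈ Set.Ioo α β)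
    (hxT : f (pr α) (pr α) (pr x) = 0) : IsCompact (arcClass f α β x) := by
  obtain ⟨U, hU, hαU, hUF⟩ := W.isolatedIn_left hx hxT
  have hK : arcClass f α β x = pr ⁻¹' (suppF f (pr α) (pr x) ∩ Uᶜ) ∩ Set.Icc α β := by
    ext t
    refine ⟨fun ⟨ht, hft⟩ => ⟨⟨hft, fun htU => ?_⟩, Set.Ioo_subset_Icc_self ht⟩, ?_⟩
    · exact W.pr_ne_left (Set.Ioo_subset_Ioc_self ht) (hUF ▸ ⟨htU, hft⟩ : pr t ∈ ({pr α} : Set S1))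
    · rintro ⟨⟨hft, htU⟩, hαt, htβ⟩
      refine ⟨⟨hαt.lt_of_ne ?_, htβ.lt_of_ne ?_⟩, hft⟩
      · rintro rfl; exact htU hαU
      · rintro rfl; exact hft (W.apply_right_eq_zero hx hxT)
  rw [hK]
  exact isCompact_Icc.inter_left (((W.conic.supp_closed _ _ (W.mem_conicDom_left hx)).inter
    hU.isClosed_compl).preimage continuous_pr)

lemma mem_arcClass_iff (W : TangentWindow I f α β) {x y : ℝ} (hx : x ∈ Set.Ioo α β) :
    y ∈ arcClass f α β x ↔ y ∈ Set.Ioo α β ∧ f (pr α) (pr y) = f (pr α) (pr x) :=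
  ⟨fun hy => ⟨hy.1, W.conic_eq_of_mem_arcClass hx hy⟩,
    fun ⟨hy, h⟩ => ⟨hy, h ▸ (W.self_mem_arcClass hy).2⟩⟩

lemma conic_eq_of_interlace (W : TangentWindow I f α β) {γ s δ t : ℝ}
    (hγ : γ ∈ Set.Ioo α β) (hs : s ∈ Set.Ioo α β) (hγs : γ ≤ s) (hsδ : s < δ) (hδt : δ < t)
    (htα : t < α + 1) (hδ : f (pr α) (pr γ) (pr δ) ≠ 0) (ht : f (pr α) (pr s) (pr t) ≠ 0) :
    f (pr α) (pr γ) = f (pr α) (pr s) :=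
  W.conic.eq_of_chain _ _ _ _ _ _ (W.mem_conicDom_left hγ) (W.mem_conicDom_left hs) hδ ht
    (Or.inl ⟨α, α, γ, s, δ, t, rfl, rfl, rfl, rfl, rfl, rfl, le_rfl, hγ.1.le, hγs, hsδ, hδt, htα⟩)
    (fun h => (W.pr_ne_left (Set.Ioo_subset_Ioc_self hγ) h.symm).elim)
    (fun h => (W.pr_ne_left (Set.Ioo_subset_Ioc_self hs) h.symm).elim)

lemma tangent_apply_eq_zero_of_mem_Ico (W : TangentWindow I f α β) {x γ δ w : ℝ}
    (hx : x ∈ Set.Ioo α β) (hxT : f (pr α) (pr α) (pr x) = 0) (hγ : γ ∈ arcClass f α β x)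
    (hδ : δ ∈ arcClass f α β x) (hw : w ∈ Set.Ico γ δ) : f (pr α) (pr α) (pr w) = 0 := by
  by_contra hwT
  have hwm : w ∈ Set.Ioo α β := ⟨hγ.1.1.trans_le hw.1, hw.2.trans hδ.1.2⟩
  have hγx := W.conic_eq_of_mem_arcClass hx hγ
  have hwα := W.conic_eq_tangent hwm hwT
  have h := W.conic_eq_of_interlace hγ.1 hwm hw.1 hw.2 hδ.1.2 W.lt_add_one
    (hγx ▸ hδ.2) (hwα ▸ W.tangent_right_ne_zero)
  exact (W.self_mem_arcClass hx).2 (by rw [← hγx, h, hwα]; exact hxT)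

lemma gap_trap (W : TangentWindow I f α β) {x γ δ t : ℝ} (hx : x ∈ Set.Ioo α β)
    (hxT : f (pr α) (pr α) (pr x) = 0) (hγ : γ ∈ arcClass f α β x)
    (hδ : δ ∈ arcClass f α β x) (hgap : Set.Ioo γ δ ∩ arcClass f α β x = ∅)
    (ht : t ∈ Set.Ioo γ δ) :
    t ∈ Set.Ioo α β ∧ f (pr α) (pr α) (pr t) = 0 ∧ arcClass f α β t ⊆ Set.Ioo γ δ := by
  have htm : t ∈ Set.Ioo α β := ⟨hγ.1.1.trans ht.1, ht.2.trans hδ.1.2⟩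
  refine ⟨htm, W.tangent_apply_eq_zero_of_mem_Ico hx hxT hγ hδ (Set.Ioo_subset_Ico_self ht),
    fun s hs => ?_⟩
  have htx : f (pr α) (pr t) ≠ f (pr α) (pr x) := fun h =>
    hgap.subset ⟨ht, (W.mem_arcClass_iff hx).2 ⟨htm, h⟩⟩
  have hγx := W.conic_eq_of_mem_arcClass hx hγ
  have hδx := W.conic_eq_of_mem_arcClass hx hδ
  have hst := W.conic_eq_of_mem_arcClass htm hs
  have htt := (W.self_mem_arcClass htm).2
  rcases lt_trichotomy s γ with hsγ | rfl | hγs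
  · have := W.conic_eq_of_interlace hs.1 hγ.1 hsγ.le ht.1 ht.2 (hδ.1.2.trans W.lt_add_one)
      (hst ▸ htt) (hγx ▸ hδ.2)
    exact absurd (hst.symm.trans (this.trans hγx)) htx
  · exact absurd (hst.symm.trans hγx) htx
  rcases lt_trichotomy s δ with hsδ | rfl | hδs
  · exact ⟨hγs, hsδ⟩
  · exact absurd (hst.symm.trans hδx) htx
  · have := W.conic_eq_of_interlace hγ.1 htm ht.1.le ht.2 hδs (hs.1.2.trans W.lt_add_one)
      (hγx ▸ hδ.2) hs.2
    exact absurd (this.symm.trans hγx) htx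

lemma exists_isClassGap_half (W : TangentWindow I f α β)
    (hall : ∀ x ∈ Set.Ioo α β, f (pr α) (pr α) (pr x) = 0 → ¬ (arcClass f α β x).OrdConnected)
    {γ δ : ℝ} (h : IsClassGap f α β γ δ) :
    ∃ γ' δ', IsClassGap f α β γ' δ' ∧ γ < γ' ∧ δ' < δ ∧ δ' - γ' ≤ (δ - γ) / 2 := by
  obtain ⟨x, hx, hxT, hγ, hδ, hγδ, hgap⟩ := h
  set t := (γ + δ) / 2 with ht_def
  obtain ⟨htm, htT, hsub⟩ := W.gap_trap hx hxT hγ hδ hgap (t := t) ⟨by linarith, by linarith⟩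
  obtain ⟨γ', hγ', δ', hδ', hγδ', hgap'⟩ :=
    (W.isCompact_arcClass htm htT).exists_gap_of_not_ordConnected (hall t htm htT)
  refine ⟨γ', δ', ⟨t, htm, htT, hγ', hδ', hγδ', hgap'⟩, (hsub hγ').1, (hsub hδ').2, ?_⟩
  have ht : t ∉ Set.Ioo γ' δ' := fun h => hgap'.subset ⟨h, W.self_mem_arcClass htm⟩
  rw [Set.mem_Ioo, not_and_or, not_lt, not_lt] at ht
  rcases ht with ht | ht <;> linarith [(hsub hγ').1, (hsub hδ').2]

lemma exists_ordConnected_arcClass (W : TangentWindow I f α β)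
    (hx₀ : ∃ x₀ ∈ Set.Ioo α β, f (pr α) (pr α) (pr x₀) = 0) :
    ∃ x ∈ Set.Ioo α β, f (pr α) (pr α) (pr x) = 0 ∧ (arcClass f α β x).OrdConnected := by
  by_contra! hall
  obtain ⟨x₀, hx₀, hx₀T⟩ := hx₀
  obtain ⟨γ₀, hγ₀, δ₀, hδ₀, hγδ₀, hgap₀⟩ :=
    (W.isCompact_arcClass hx₀ hx₀T).exists_gap_of_not_ordConnected (hall x₀ hx₀ hx₀T)
  obtain ⟨w, hw⟩ := exists_forall_exists_mem_Ioo_of_halving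
    (fun _ _ ⟨_, _, _, _, _, h, _⟩ => h) (fun _ _ => W.exists_isClassGap_half hall)
    ⟨x₀, hx₀, hx₀T, hγ₀, hδ₀, hγδ₀, hgap₀⟩
  -- `w` lies in arbitrarily short gaps, which trap its arc class: the class is `{w}`
  have htrap : ∀ ε > 0, w ∈ Set.Ioo α β ∧ f (pr α) (pr α) (pr w) = 0 ∧
      ∀ s ∈ arcClass f α β w, |s - w| < ε := by
    intro ε hε
    obtain ⟨γ, δ, ⟨x, hx, hxT, hγ, hδ, -, hgap⟩, hwγδ, hlen⟩ := hw ε hε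
    obtain ⟨hwm, hwT, hsub⟩ := W.gap_trap hx hxT hγ hδ hgap hwγδ
    refine ⟨hwm, hwT, fun s hs => abs_sub_lt_iff.2 ⟨?_, ?_⟩⟩ <;>
      linarith [(hsub hs).1, (hsub hs).2, hwγδ.1, hwγδ.2]
  obtain ⟨hwm, hwT, -⟩ := htrap 1 one_pos
  have hsingle : arcClass f α β w = {w} :=
    Set.eq_singleton_iff_unique_mem.2 ⟨W.self_mem_arcClass hwm, fun s hs => by
      by_contra hsw
      exact lt_irrefl _ ((htrap _ (abs_pos.2 (sub_ne_zero.2 hsw))).2.2 s hs)⟩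
  exact hall w hwm hwT (hsingle ▸ Set.ordConnected_singleton)

lemma four_le_of_Icc_subset (W : TangentWindow I f α β) {x y z : ℝ} (hx : x ∈ Set.Ioo α β)
    (hyz : y < z) (hsub : Set.Icc y z ⊆ arcClass f α β x) : 4 ≤ f (pr α) (pr x) (pr y) := by
  obtain ⟨u, -, hu, hlim⟩ := exists_seq_strictAnti_tendsto' hyz
  have hmem : ∀ t ∈ Set.Icc y z, pr t ∈ closure I ∧ pr t ∈ suppF f (pr α) (pr x) := fun t ht =>
    ⟨subset_closure (W.pr_mem_of_mem_Ioo t (hsub ht).1), (hsub ht).2⟩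
  have hy : y ∈ Set.Icc y z := ⟨le_rfl, hyz.le⟩
  have hun : ∀ n, u n ∈ Set.Icc y z := fun n => Set.Ioo_subset_Icc_self (hu n)
  exact W.conic.four_le_of_tendsto (fun _ => W.mem_conicDom_left hx) (W.mem_conicDom_left hx)
    tendsto_const_nhds tendsto_const_nhds (fun _ => hmem y hy) (fun n => hmem _ (hun n))
    (hmem y hy).1 tendsto_const_nhds ((continuous_pr.tendsto y).comp hlim)
    fun n h => (hu n).1.ne (W.pr_injOn (Set.Ioo_subset_Icc_self (hsub hy).1)
      (Set.Ioo_subset_Icc_self (hsub (hun n)).1) h)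

lemma exists_four_le_of_ordConnected (W : TangentWindow I f α β) {x : ℝ}
    (hx : x ∈ Set.Ioo α β) (hxT : f (pr α) (pr α) (pr x) = 0)
    (hoc : (arcClass f α β x).OrdConnected) :
    ∃ r ∈ arcClass f α β x, 4 ≤ f (pr α) (pr x) (pr r) := by
  have hxK := W.self_mem_arcClass hx
  by_cases h : ∃ s ∈ arcClass f α β x, s ≠ x
  · obtain ⟨s, hs, hsx⟩ := h
    rcases hsx.lt_or_gt with hsx | hxs
    · exact ⟨s, hs, W.four_le_of_Icc_subset hx hsx (hoc.out hs hxK)⟩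
    · exact ⟨x, hxK, W.four_le_of_Icc_subset hx hxs (hoc.out hxK hs)⟩
  push Not at h
  refine ⟨x, hxK, W.conic.four_le_of_suppF_subset_pair (W.mem_conicDom_left hx)
    (W.pr_ne_left (Set.Ioo_subset_Ioc_self hx)).symm ?_ (W.apply_left_eq_two hx hxT)⟩
  rw [W.suppF_eq_insert_image hx hxT]
  rintro u (rfl | ⟨t, ht, rfl⟩)
  exacts [Or.inl rfl, Or.inr (congrArg pr (h t ht))]

lemma hasIntervalClass (W : TangentWindow I f α β)
    (hx₀ : ∃ x₀ ∈ Set.Ioo α β, f (pr α) (pr α) (pr x₀) = 0) :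
    HasIntervalClass f α (Set.Ioo α β) := by
  obtain ⟨x, hx, hxT, hoc⟩ := W.exists_ordConnected_arcClass hx₀
  obtain ⟨r, hr, h4⟩ := W.exists_four_le_of_ordConnected hx hxT hoc
  set K := arcClass f α β x
  have hKc := W.isCompact_arcClass hx hxT
  have hK : K = Set.Icc (sInf K) (sSup K) :=
    subset_antisymm (fun t ht => ⟨csInf_le hKc.bddBelow ht, le_csSup hKc.bddAbove ht⟩)
      (hoc.out (hKc.sInf_mem ⟨r, hr⟩) (hKc.sSup_mem ⟨r, hr⟩))
  refine ⟨x, hx, sInf K, r, sSup K, hK ▸ hr, hK ▸ fun t ht => ht.1, ?_,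
    hK ▸ W.suppF_eq_insert_image hx hxT, h4⟩
  rw [← hK]
  rintro ⟨t, ht, h⟩
  exact W.pr_ne_left (Set.Ioo_subset_Ioc_self ht.1) h

end TangentWindow

lemma IsIntrinsicConicSystem.hasIntervalClass_of_tangent_right {I : Set S1}
    {f : S1 → S1 → S1 → ℕ∞} (hf : IsIntrinsicConicSystem I f) {α β : ℝ} (hβα : β < α)
    (hαβ : α < β + 1) (hIoo : ∀ t ∈ Set.Ioo β α, pr t ∈ I) (hα : pr α ∈ I)
    (hβ : pr β ∈ closure I) (h4 : 4 ≤ f (pr α) (pr α) (pr α))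
    (hT : f (pr α) (pr α) (pr β) ≠ 0) (hx₀ : ∃ x₀ ∈ Set.Ioo β α, f (pr α) (pr α) (pr x₀) = 0) :
    HasIntervalClass f α (Set.Ioo β α) := by
  have W : TangentWindow (-I) (conicNeg f) (-α) (-β) :=
    { conic := hf.neg
      lt := neg_lt_neg hβα
      lt_add_one := by linarith
      pr_mem_of_mem_Ioo := fun t ht => by
        rw [Set.mem_neg, ← pr_neg]
        exact hIoo _ ⟨by linarith [ht.2], by linarith [ht.1]⟩
      pr_left_mem := by rwa [Set.mem_neg, ← pr_neg, neg_neg]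
      pr_right_mem_closure := by rwa [← neg_closure, Set.mem_neg, ← pr_neg, neg_neg]
      four_le_tangent := by rwa [conicNeg_pr, neg_neg]
      tangent_right_ne_zero := by rwa [conicNeg_pr, neg_neg, neg_neg] }
  obtain ⟨x₀, hx₀, hx₀T⟩ := hx₀
  have := (W.hasIntervalClass ⟨-x₀, ⟨neg_lt_neg hx₀.2, neg_lt_neg hx₀.1⟩,
    by rwa [conicNeg_pr, neg_neg, neg_neg]⟩).of_conicNeg
  rwa [neg_neg, Set.neg_Ioo, neg_neg, neg_neg] at this
lemma TangentWindow.of_arc {a b : ℝ} (hab : a < b) (hb1 : b < a + 1) {I : Set S1}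
    (hI : I = arcCC a b ∨ I = arcCO a b) {f : S1 → S1 → S1 → ℕ∞}
    (hf : IsIntrinsicConicSystem I f) (heq : f (pr a) (pr a) = f (pr a) (pr b)) :
    TangentWindow I f a b := by
  have hCO : pr '' Set.Ico a b ⊆ I := by
    rcases hI with rfl | rfl
    exacts [Set.image_mono Set.Ico_subset_Icc_self, subset_rfl]
  have hCC : pr '' Set.Icc a b ⊆ closure I := by
    rw [← closure_Ico hab.ne]
    exact (image_closure_subset_closure_image continuous_pr).trans (closure_mono hCO)
  have ha : pr a ∈ I := hCO ⟨a, ⟨le_rfl, hab⟩, rfl⟩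
  have hIoo : ∀ t ∈ Set.Ioo a b, pr t ∈ I := fun t ht => hCO ⟨t, Set.Ioo_subset_Ico_self ht, rfl⟩
  have hb : pr b ∈ closure I := hCC ⟨b, ⟨hab.le, le_rfl⟩, rfl⟩
  have hab' : pr a ≠ pr b := fun h =>
    hab.ne ((pr_injOn_Ico a) ⟨le_rfl, by linarith⟩ ⟨hab.le, hb1⟩ h)
  refine ⟨hf, hab, hb1, hIoo, ha, hb, hf.four_le_apply_self hab hb1 hIoo ha, ?_⟩
  rw [heq]
  exact (hf.self_mem _ _ (mem_conicDom_of_ne (subset_closure ha) hb hab')).2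

namespace TangentWindow

variable {I : Set S1} {f : S1 → S1 → S1 → ℕ∞} {α β : ℝ}

/-- By (A5), `f_{c,c}` is the conic through `α` found in `(α,β)`, which misses `(α,m)`; so the
argument can be rerun from `c` towards `α`. -/
lemma exists_hasIntervalClass_tangent_right (W : TangentWindow I f α β)
    (h : HasIntervalClass f α (Set.Ioo α β)) :
    ∃ c ∈ Set.Ioo α β, HasIntervalClass f c (Set.Ioo α c) := by
  obtain ⟨x, hx, m, c, M, hc, hsub, -, hsupp, h4⟩ := h
  have hcm : c ∈ Set.Ioo α β := hsub hc
  have hdx := W.mem_conicDom_left hx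
  have hTc : f (pr c) (pr c) = f (pr α) (pr x) :=
    W.conic.eq_diag _ _ _ hdx h4 (W.pr_mem_of_mem_Ioo c hcm)
  have hm : α < m := (hsub ⟨le_rfl, hc.1.trans hc.2⟩).1
  have hx₀ : (α + m) / 2 ∈ Set.Ioo α β := ⟨by linarith, by linarith [hcm.2, hc.1]⟩
  have hx₀T : f (pr c) (pr c) (pr ((α + m) / 2)) = 0 := by
    by_contra hne
    have hmem : pr ((α + m) / 2) ∈ suppF f (pr α) (pr x) := by
      change f (pr α) (pr x) _ ≠ 0
      rwa [← hTc]
    rw [hsupp] at hmem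
    rcases hmem with h | h
    · exact W.pr_ne_left (Set.Ioo_subset_Ioc_self hx₀) h
    · have := (W.pr_injOn.mem_image_iff (fun t ht => Set.Ioo_subset_Icc_self (hsub ht))
        (Set.Ioo_subset_Icc_self hx₀)).1 h
      linarith [this.1]
  refine ⟨c, hcm, W.conic.hasIntervalClass_of_tangent_right hcm.1
    (by linarith [hcm.2, W.lt_add_one])
    (fun t ht => W.pr_mem_of_mem_Ioo t ⟨ht.1, ht.2.trans hcm.2⟩) (W.pr_mem_of_mem_Ioo c hcm)
    (subset_closure W.pr_left_mem) (hTc ▸ h4) (hTc ▸ (W.conic.self_mem _ _ hdx).1)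
    ⟨_, ⟨hx₀.1, by linarith [hc.1]⟩, hx₀T⟩⟩

lemma exists_interior_pair (W : TangentWindow I f α β) {c : ℝ} (hcm : c ∈ Set.Ioo α β)
    (h : HasIntervalClass f c (Set.Ioo α c)) :
    ∃ a₁ b₁ : ℝ, α < a₁ ∧ a₁ < b₁ ∧ b₁ < β ∧
      f (pr a₁) (pr b₁) = f (pr a₁) (pr a₁) ∧
      suppF f (pr a₁) (pr b₁) = suppF f (pr a₁) (pr a₁) ∧
      suppF f (pr a₁) (pr b₁) ⊆ arcOO α β ∧
      IsolatedIn (pr b₁) (suppF f (pr a₁) (pr b₁)) ∧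
      TwoComponents (suppF f (pr a₁) (pr b₁)) := by
  obtain ⟨y, hy, m, r, M, hr, hsub, hc, hsupp, h4⟩ := h
  have hIoo : ∀ {t}, t ∈ Set.Ioo α c → t ∈ Set.Ioo α β := fun ht => ⟨ht.1, ht.2.trans hcm.2⟩
  have hrm : r ∈ Set.Ioo α c := hsub hr
  have hne : ∀ {t}, t ∈ Set.Ioo α c → pr c ≠ pr t := fun ht h =>
    ht.2.ne' (W.pr_injOn (Set.Ioo_subset_Icc_self hcm) (Set.Ioo_subset_Icc_self (hIoo ht)) h)
  have hcI := W.pr_mem_of_mem_Ioo c hcm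
  have hrI := W.pr_mem_of_mem_Ioo r (hIoo hrm)
  have hdcy : (pr c, pr y) ∈ ConicDom I := mem_conicDom_of_ne (subset_closure hcI)
    (subset_closure (W.pr_mem_of_mem_Ioo y (hIoo hy))) (hne hy)
  have hTr : f (pr r) (pr r) = f (pr c) (pr y) := W.conic.eq_diag _ _ _ hdcy h4 hrI
  have hdrc : (pr r, pr c) ∈ ConicDom I :=
    mem_conicDom_of_ne (subset_closure hrI) (subset_closure hcI) (hne hrm).symm
  have hrc : f (pr r) (pr c) = f (pr r) (pr r) :=
    W.conic.eq_of_common _ _ _ (pr c) hdrc (mem_conicDom_self hrI) (hne hrm)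
      (W.conic.self_mem _ _ hdrc).2 (hTr ▸ (W.conic.self_mem _ _ hdcy).1)
  have hsupp' : suppF f (pr r) (pr c) = insert (pr c) (pr '' Set.Icc m M) := by
    rw [← hsupp, suppF, suppF, hrc, hTr]
  have hK : IsClosed (pr '' Set.Icc m M) := (isCompact_Icc.image continuous_pr).isClosed
  refine ⟨r, c, hrm.1, hrm.2, hcm.2, hrc, by rw [suppF, suppF, hrc], ?_,
    hsupp' ▸ isolatedIn_insert hK hc,
    hsupp' ▸ twoComponents_insert hK (isPreconnected_Icc.image _ continuous_pr.continuousOn)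
      ⟨pr r, r, hr, rfl⟩ hc⟩
  rw [hsupp']
  exact Set.insert_subset ⟨c, hcm, rfl⟩
    (Set.image_mono (hsub.trans (Set.Ioo_subset_Ioo_right hcm.2.le)))

end TangentWindow

/-- If `f_{a,a} = f_{a,b}` and `F_{a,b}` misses `(a,b)`, then there are two
distinct points `a ≺ a₁ ≺ b₁ ≺ b` with `f_{a₁,b₁} = f_{a₁,a₁}`, support
`F_{a₁,b₁} = F_{a₁,a₁}` contained in `(a,b)`, `b₁` isolated in `F_{a₁,b₁}`,
and `F_{a₁,b₁}` having exactly two components. -/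
theorem conicSystem_exists_interior_pair
    (a b : ℝ) (hab : a < b) (hb1 : b < a + 1)
    (I : Set S1) (hI : I = arcCC a b ∨ I = arcCO a b)
    (f : S1 → S1 → S1 → ℕ∞)
    (hf : IsIntrinsicConicSystem I f)
    (heq : f (pr a) (pr a) = f (pr a) (pr b))
    (hdisj : suppF f (pr a) (pr b) ∩ arcOO a b = ∅) :
    ∃ a₁ b₁ : ℝ, a < a₁ ∧ a₁ < b₁ ∧ b₁ < b ∧
      f (pr a₁) (pr b₁) = f (pr a₁) (pr a₁) ∧
      suppF f (pr a₁) (pr b₁) = suppF f (pr a₁) (pr a₁) ∧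
      suppF f (pr a₁) (pr b₁) ⊆ arcOO a b ∧
      IsolatedIn (pr b₁) (suppF f (pr a₁) (pr b₁)) ∧
      TwoComponents (suppF f (pr a₁) (pr b₁)) := by
  have W := TangentWindow.of_arc hab hb1 hI hf heq
  have hmid : (a + b) / 2 ∈ Set.Ioo a b := ⟨by linarith, by linarith⟩
  have hoff : f (pr a) (pr a) (pr ((a + b) / 2)) = 0 := by
    by_contra h
    have h' : f (pr a) (pr b) (pr ((a + b) / 2)) ≠ 0 := heq ▸ h
    exact hdisj.subset ⟨h', _, hmid, rfl⟩
  obtain ⟨c, hc, hcls⟩ :=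
    W.exists_hasIntervalClass_tangent_right (W.hasIntervalClass ⟨_, hmid, hoff⟩)
  exact W.exists_interior_pair hc hcls
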